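/- Let r ∈ ℕ with r ≥ 2 and p ∈ (0,1). Let N₁ be negative binomial with parameters r+1 and p, and N₂ be negative binomial with parameters r−1 and 1−p, independent, and let ĝ = (r/(N₁−1))·(N₂/(r−1)) and g = p/(1−p). Then Var[ĝ]/g² < 1/(r−1), where Var[ĝ] = E[ĝ²] − (E[ĝ])² and all expectations are the corresponding (double) series over n₁ ≥ r+1 and n₂ ≥ r−1 weighted by the negative binomial probabilities. -/

import Mathlib

open scoped BigOperators

/-- Expectation of `f(N)` where `N` is negative binomial with parameters `s` and `q`:
`E[f(N)] = Σ_{n ≥ s} f(n) C(n−1, s−1) q^s (1−q)^{n−s}`, written with `n = s + k`. -/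
noncomputable def negbinExp (s : ℕ) (q : ℝ) (f : ℕ → ℝ) : ℝ :=
  ∑' k : ℕ, ((s + k - 1).choose (s - 1) : ℝ) * q ^ s * (1 - q) ^ k * f (s + k)

/-- Expectation of `f(N₁, N₂)` for independent negative binomials with parameters
`(s₁, q₁)` and `(s₂, q₂)`. -/
noncomputable def negbinExp2 (s₁ : ℕ) (q₁ : ℝ) (s₂ : ℕ) (q₂ : ℝ) (f : ℕ → ℕ → ℝ) : ℝ :=
  ∑' k₁ : ℕ, ∑' k₂ : ℕ,
    ((s₁ + k₁ - 1).choose (s₁ - 1) : ℝ) * q₁ ^ s₁ * (1 - q₁) ^ k₁ *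
      (((s₂ + k₂ - 1).choose (s₂ - 1) : ℝ) * q₂ ^ s₂ * (1 - q₂) ^ k₂) *
      f (s₁ + k₁) (s₂ + k₂)

/-- The m-th harmonic number `H_m = Σ_{k=1}^m 1/k`, `H_0 = 0`. -/
noncomputable def H (m : ℕ) : ℝ := ∑ k ∈ Finset.range m, (1 : ℝ) / (k + 1)

/-- The odds estimator `ĝ = (r/(N₁−1))·(N₂/(r−1))`. -/
noncomputable def ghat (r : ℕ) (n₁ n₂ : ℕ) : ℝ :=
  ((r : ℝ) / ((n₁ : ℝ) - 1)) * ((n₂ : ℝ) / ((r : ℝ) - 1))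

/-!
ĝ is a product of a function of `N₁` and a function of `N₂`, so its moments factor. Writing
`x = 1 − q` for the parameter `q` of either factor, each moment needed is a series
`Σ C(k+s, s) xᵏ · (rational function of k)`, and `C(k+s, s)(k+s+1) = (s+1) C(k+s+1, s+1)`
reduces all but one of them to `Σ C(k+s, s) xᵏ = (1 − x)^{−(s+1)}`: `E[r/(N₁−1)] = p` and
`E[N₂] = (r−1)/(1−p)`, so `E[ĝ] = g`, and `E[N₂²] = (r−1)(r−1+p)/(1−p)²`. The remaining moment
satisfies `E[1/(N₁−1)²] < p²/(r(r−1+p))`: the product of `r − x` with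
`Σ C(k+r−1, r−1) xᵏ/(k+r)` has coefficients bounded by those of
`Σ C(k+r−2, r−2) xᵏ = p^{−(r−1)}`, strictly from `k = 1` on. Hence `E[ĝ²] < g² r/(r−1)`.
-/

theorem Nat.cast_choose_mul_add_one {R : Type*} [CommSemiring R] (s k : ℕ) :
    ((k + s).choose s : R) * (k + s + 1) = (s + 1) * ((k + (s + 1)).choose (s + 1) : R) := by
  rw [mul_comm, mul_comm (s + 1 : R), ← Nat.add_assoc]
  exact_mod_cast congrArg (Nat.cast : ℕ → R) (Nat.add_one_mul_choose_eq (k + s) s)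

section Series

variable {𝕜 : Type*} [NormedField 𝕜]

theorem hasSum_choose_mul_geometric_mul_add_one (s : ℕ) {x : 𝕜} (hx : ‖x‖ < 1) :
    HasSum (fun k : ℕ => ((k + s).choose s : 𝕜) * x ^ k * (k + s + 1))
      ((s + 1) / (1 - x) ^ (s + 2)) := by
  have h := (hasSum_choose_mul_geometric_of_norm_lt_one (s + 1) hx).mul_left ((s : 𝕜) + 1)
  rw [show ((s : 𝕜) + 1) / (1 - x) ^ (s + 2) = (s + 1) * (1 / (1 - x) ^ (s + 1 + 1)) by ring]
  refine h.congr_fun fun k => ?_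
  rw [mul_right_comm, Nat.cast_choose_mul_add_one]
  ring

theorem hasSum_choose_mul_geometric_mul_add_one_sq (s : ℕ) {x : 𝕜} (hx : ‖x‖ < 1) :
    HasSum (fun k : ℕ => ((k + s).choose s : 𝕜) * x ^ k * (k + s + 1) ^ 2)
      ((s + 1) * (s + 2) / (1 - x) ^ (s + 3) - (s + 1) / (1 - x) ^ (s + 2)) := by
  have h := ((hasSum_choose_mul_geometric_of_norm_lt_one (s + 2) hx).mul_left
    (((s : 𝕜) + 1) * (s + 2))).sub
    ((hasSum_choose_mul_geometric_of_norm_lt_one (s + 1) hx).mul_left ((s : 𝕜) + 1))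
  rw [show ((s : 𝕜) + 1) * (s + 2) / (1 - x) ^ (s + 3) - (s + 1) / (1 - x) ^ (s + 2)
    = (s + 1) * (s + 2) * (1 / (1 - x) ^ (s + 2 + 1)) - (s + 1) * (1 / (1 - x) ^ (s + 1 + 1))
    by ring]
  refine h.congr_fun fun k => ?_
  have e₁ := Nat.cast_choose_mul_add_one (R := 𝕜) s k
  have e₂ := Nat.cast_choose_mul_add_one (R := 𝕜) (s + 1) k
  push_cast at e₁ e₂ ⊢
  linear_combination x ^ k * (k + s + 1) * e₁ + x ^ k * (s + 1) * e₂

end Series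

theorem add_two_mul_choose_div_sub_choose_div_lt (t n : ℕ) :
    (t + 2 : ℝ) * ((n + 1 + (t + 1)).choose (t + 1) / (n + 1 + t + 2))
      - (n + (t + 1)).choose (t + 1) / (n + t + 2) < (n + 1 + t).choose t := by
  have hpascal : ((n + 1 + (t + 1)).choose (t + 1) : ℝ)
      = (n + 1 + t).choose t + (n + (t + 1)).choose (t + 1) := by
    rw [show n + 1 + (t + 1) = n + (t + 1) + 1 by omega, Nat.choose_succ_succ',
      show n + (t + 1) = n + 1 + t by omega, Nat.cast_add]
  have hratio : ((n + (t + 1)).choose (t + 1) : ℝ) * (t + 1) = (n + 1 + t).choose t * (n + 1) := by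
    rw [show n + (t + 1) = n + 1 + t by omega]
    exact_mod_cast (Nat.add_sub_cancel (n + 1) t) ▸ Nat.choose_succ_right_eq (n + 1 + t) t
  have hA : (0 : ℝ) < (n + (t + 1)).choose (t + 1) := by exact_mod_cast Nat.choose_pos (by omega)
  rw [hpascal]
  generalize ((n + (t + 1)).choose (t + 1) : ℝ) = A at *
  generalize ((n + 1 + t).choose t : ℝ) = B at *
  have hgap : B - ((t + 2 : ℝ) * ((B + A) / (n + 1 + t + 2)) - A / (n + t + 2))
      = A / ((n + t + 2) * (n + t + 3)) := by
    field_simp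
    linear_combination -((n + t + 2 : ℝ) * (n + t + 3)) * hratio
  linarith [div_pos hA (by positivity : (0 : ℝ) < (n + t + 2) * (n + t + 3))]

theorem tsum_choose_div_mul_geometric_lt (t : ℕ) {x : ℝ} (hx₀ : 0 < x) (hx₁ : x < 1) :
    ∑' n : ℕ, ((n + (t + 1)).choose (t + 1) : ℝ) / (n + t + 2) * x ^ n
      < 1 / ((1 - x) ^ (t + 1) * (t + 2 - x)) := by
  have hx : ‖x‖ < 1 := by rwa [Real.norm_of_nonneg hx₀.le]
  set a : ℕ → ℝ := fun n => ((n + (t + 1)).choose (t + 1) : ℝ) / (n + t + 2)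
  have hS : HasSum (fun n => a n * x ^ n) (∑' n, a n * x ^ n) := by
    refine ((summable_choose_mul_geometric_of_norm_lt_one (t + 1) hx).of_nonneg_of_le
      (fun n => by positivity) fun n => ?_).hasSum
    exact mul_le_mul_of_nonneg_right
      (div_le_self (by positivity) (by linarith [(n.cast_nonneg : (0 : ℝ) ≤ n)])) (by positivity)
  set S := ∑' n, a n * x ^ n
  -- `(t + 2 - x) S` and `1 / (1 - x) ^ (t + 1)` both have constant term 1; compare the rest termwise.
  have ha₀ : ∑ i ∈ Finset.range 1, a i * x ^ i = 1 / (t + 2) := by simp [a]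
  have hb₀ : ∑ i ∈ Finset.range 1, ((i + t).choose t : ℝ) * x ^ i = 1 := by simp
  have hshift := (hasSum_nat_add_iff' (f := fun n => a n * x ^ n) 1).mpr hS
  have hrhs := (hasSum_nat_add_iff' (f := fun n => ((n + t).choose t : ℝ) * x ^ n) 1).mpr
    (hasSum_choose_mul_geometric_of_norm_lt_one t hx)
  rw [ha₀] at hshift
  rw [hb₀] at hrhs
  have hlhs := (hshift.mul_left ((t : ℝ) + 2)).sub (hS.mul_left x)
  have hterm : ∀ n : ℕ, (t + 2) * (a (n + 1) * x ^ (n + 1)) - x * (a n * x ^ n)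
      < ((n + 1 + t).choose t : ℝ) * x ^ (n + 1) := by
    intro n
    have h := mul_lt_mul_of_pos_left (add_two_mul_choose_div_sub_choose_div_lt t n)
      (pow_pos hx₀ (n + 1))
    simp only [a]
    push_cast
    linear_combination h
  have hlt := hasSum_lt (f := fun n => (t + 2) * (a (n + 1) * x ^ (n + 1)) - x * (a n * x ^ n))
    (g := fun n => ((n + 1 + t).choose t : ℝ) * x ^ (n + 1)) (fun n => (hterm n).le) (hterm 0)
    hlhs hrhs
  have hcancel : ((t : ℝ) + 2) * (S - 1 / (t + 2)) = (t + 2) * S - 1 := by field_simp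
  have hP : 0 < (1 - x) ^ (t + 1) := pow_pos (by linarith) _
  rw [lt_div_iff₀ (mul_pos hP (by linarith)), mul_comm, mul_assoc, ← lt_div_iff₀' hP]
  linarith

theorem negbinExp_succ (s : ℕ) (q : ℝ) (f : ℕ → ℝ) :
    negbinExp (s + 1) q f
      = q ^ (s + 1) * ∑' k : ℕ, ((k + s).choose s : ℝ) * (1 - q) ^ k * f (k + s + 1) := by
  rw [negbinExp, ← tsum_mul_left]
  refine tsum_congr fun k => ?_
  rw [Nat.add_sub_cancel, show s + 1 + k - 1 = k + s by omega, show s + 1 + k = k + s + 1 by omega]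
  ring

theorem negbinExp_const_mul (s : ℕ) (q c : ℝ) (f : ℕ → ℝ) :
    negbinExp s q (fun n => c * f n) = c * negbinExp s q f := by
  rw [negbinExp, negbinExp, ← tsum_mul_left]
  refine tsum_congr fun k => ?_
  ring

theorem negbinExp2_mul (s₁ : ℕ) (q₁ : ℝ) (s₂ : ℕ) (q₂ : ℝ) (f₁ f₂ : ℕ → ℝ) :
    negbinExp2 s₁ q₁ s₂ q₂ (fun n₁ n₂ => f₁ n₁ * f₂ n₂)
      = negbinExp s₁ q₁ f₁ * negbinExp s₂ q₂ f₂ := by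
  rw [negbinExp2, negbinExp, negbinExp, ← tsum_mul_right]
  refine tsum_congr fun k₁ => ?_
  rw [← tsum_mul_left]
  refine tsum_congr fun k₂ => ?_
  ring

theorem negbinExp_natCast {s : ℕ} (hs : 1 ≤ s) {q : ℝ} (hq : |1 - q| < 1) :
    negbinExp s q (fun n => n) = s / q := by
  obtain ⟨s, rfl⟩ : ∃ t, s = t + 1 := ⟨s - 1, by omega⟩
  have hq₀ : q ≠ 0 := by rintro rfl; norm_num at hq
  rw [negbinExp_succ]
  push_cast
  rw [(hasSum_choose_mul_geometric_mul_add_one s (by rwa [Real.norm_eq_abs])).tsum_eq,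
    sub_sub_cancel]
  field_simp
  ring

theorem negbinExp_natCast_sq {s : ℕ} (hs : 1 ≤ s) {q : ℝ} (hq : |1 - q| < 1) :
    negbinExp s q (fun n => (n : ℝ) ^ 2) = s * (s + 1 - q) / q ^ 2 := by
  obtain ⟨s, rfl⟩ : ∃ t, s = t + 1 := ⟨s - 1, by omega⟩
  have hq₀ : q ≠ 0 := by rintro rfl; norm_num at hq
  rw [negbinExp_succ]
  push_cast
  rw [(hasSum_choose_mul_geometric_mul_add_one_sq s (by rwa [Real.norm_eq_abs])).tsum_eq,
    sub_sub_cancel]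
  field_simp
  ring

theorem negbinExp_one_div_sub_one {r : ℕ} (hr : 1 ≤ r) {q : ℝ} (hq : |1 - q| < 1) :
    negbinExp (r + 1) q (fun n => 1 / ((n : ℝ) - 1)) = q / r := by
  obtain ⟨t, rfl⟩ : ∃ t, r = t + 1 := ⟨r - 1, by omega⟩
  have hq₀ : q ≠ 0 := by rintro rfl; norm_num at hq
  have hterm : ∀ k : ℕ, ((k + (t + 1)).choose (t + 1) : ℝ) * (1 - q) ^ k
      * (1 / (((k + (t + 1) + 1 : ℕ) : ℝ) - 1))
      = ((t : ℝ) + 1)⁻¹ * (((k + t).choose t : ℝ) * (1 - q) ^ k) := by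
    intro k
    have e := Nat.cast_choose_mul_add_one (R := ℝ) t k
    rw [show ((k + (t + 1) + 1 : ℕ) : ℝ) - 1 = k + t + 1 by push_cast; ring]
    generalize ((k + (t + 1)).choose (t + 1) : ℝ) = C at e ⊢
    field_simp
    linear_combination -(1 - q) ^ k * e
  rw [negbinExp_succ, tsum_congr hterm, tsum_mul_left,
    tsum_choose_mul_geometric_of_norm_lt_one t (by rwa [Real.norm_eq_abs]), sub_sub_cancel]
  push_cast
  field_simp
  ring

theorem negbinExp_one_div_sub_one_sq_lt {r : ℕ} (hr : 2 ≤ r) {q : ℝ} (hq₀ : 0 < q) (hq₁ : q < 1) :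
    negbinExp (r + 1) q (fun n => 1 / ((n : ℝ) - 1) ^ 2) < q ^ 2 / (r * (r - 1 + q)) := by
  obtain ⟨t, rfl⟩ : ∃ t, r = t + 2 := ⟨r - 2, by omega⟩
  have hterm : ∀ k : ℕ, ((k + (t + 2)).choose (t + 2) : ℝ) * (1 - q) ^ k
      * (1 / (((k + (t + 2) + 1 : ℕ) : ℝ) - 1) ^ 2)
      = ((t : ℝ) + 2)⁻¹ * (((k + (t + 1)).choose (t + 1) : ℝ) / (k + t + 2) * (1 - q) ^ k) := by
    intro k
    have e := Nat.cast_choose_mul_add_one (R := ℝ) (t + 1) k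
    rw [show ((k + (t + 2) + 1 : ℕ) : ℝ) - 1 = k + t + 2 by push_cast; ring]
    generalize ((k + (t + 2)).choose (t + 2) : ℝ) = C at e ⊢
    generalize ((k + (t + 1)).choose (t + 1) : ℝ) = C₀ at e ⊢
    push_cast at e
    field_simp
    linear_combination -(1 - q) ^ k * e
  rw [negbinExp_succ, tsum_congr hterm, tsum_mul_left]
  calc q ^ (t + 2 + 1) * ((t + 2 : ℝ)⁻¹ * ∑' k : ℕ,
        ((k + (t + 1)).choose (t + 1) : ℝ) / (k + t + 2) * (1 - q) ^ k)
      < q ^ (t + 2 + 1) * ((t + 2 : ℝ)⁻¹ * (1 / ((1 - (1 - q)) ^ (t + 1) * (t + 2 - (1 - q))))) := by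
        gcongr
        exact tsum_choose_div_mul_geometric_lt t (by linarith) (by linarith)
    _ = q ^ 2 / ((t + 2 : ℕ) * ((t + 2 : ℕ) - 1 + q)) := by
        push_cast
        field_simp
        ring

theorem negbinExp2_ghat {r : ℕ} (hr : 2 ≤ r) {p : ℝ} (hp₀ : 0 < p) (hp₁ : p < 1) :
    negbinExp2 (r + 1) p (r - 1) (1 - p) (ghat r) = p / (1 - p) := by
  have hq : 0 < 1 - p := by linarith
  have hr₁ : (0 : ℝ) < r - 1 := by rw [sub_pos]; exact_mod_cast hr
  rw [show ghat r = fun (n₁ n₂ : ℕ) => (r * (1 / ((n₁ : ℝ) - 1))) * (((r : ℝ) - 1)⁻¹ * n₂) by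
      funext n₁ n₂; rw [ghat]; ring,
    negbinExp2_mul, negbinExp_const_mul, negbinExp_const_mul,
    negbinExp_one_div_sub_one (by omega) (by rw [abs_of_pos hq]; linarith),
    negbinExp_natCast (by omega) (by rwa [sub_sub_cancel, abs_of_pos hp₀]),
    Nat.cast_sub (by omega), Nat.cast_one]
  field_simp

theorem negbinExp2_ghat_sq_lt {r : ℕ} (hr : 2 ≤ r) {p : ℝ} (hp₀ : 0 < p) (hp₁ : p < 1) :
    negbinExp2 (r + 1) p (r - 1) (1 - p) (fun n₁ n₂ => ghat r n₁ n₂ ^ 2)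
      < (p / (1 - p)) ^ 2 * (r / (r - 1)) := by
  have hq : 0 < 1 - p := by linarith
  have hr₁ : (0 : ℝ) < r - 1 := by rw [sub_pos]; exact_mod_cast hr
  rw [show (fun n₁ n₂ => ghat r n₁ n₂ ^ 2) = fun (n₁ n₂ : ℕ) =>
      ((r : ℝ) ^ 2 * (1 / ((n₁ : ℝ) - 1) ^ 2)) * ((((r : ℝ) - 1) ^ 2)⁻¹ * (n₂ : ℝ) ^ 2) by
      funext n₁ n₂; rw [ghat, mul_pow, div_pow, div_pow]; ring,
    negbinExp2_mul, negbinExp_const_mul, negbinExp_const_mul,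
    negbinExp_natCast_sq (by omega) (by rwa [sub_sub_cancel, abs_of_pos hp₀]),
    Nat.cast_sub (by omega), Nat.cast_one, show (r : ℝ) - 1 + 1 - (1 - p) = r - 1 + p by ring]
  have hfactor : (0 : ℝ) < (((r : ℝ) - 1) ^ 2)⁻¹ * ((r - 1) * (r - 1 + p) / (1 - p) ^ 2) :=
    mul_pos (inv_pos.2 (pow_pos hr₁ 2)) (div_pos (mul_pos hr₁ (by linarith)) (pow_pos hq 2))
  calc (r : ℝ) ^ 2 * negbinExp (r + 1) p (fun n => 1 / ((n : ℝ) - 1) ^ 2)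
        * ((((r : ℝ) - 1) ^ 2)⁻¹ * ((r - 1) * (r - 1 + p) / (1 - p) ^ 2))
      < (r : ℝ) ^ 2 * (p ^ 2 / (r * (r - 1 + p)))
        * ((((r : ℝ) - 1) ^ 2)⁻¹ * ((r - 1) * (r - 1 + p) / (1 - p) ^ 2)) :=
        mul_lt_mul_of_pos_right (mul_lt_mul_of_pos_left
          (negbinExp_one_div_sub_one_sq_lt hr hp₀ hp₁) (by positivity)) hfactor
    _ = (p / (1 - p)) ^ 2 * (r / (r - 1)) := by field_simp

theorem odds_estimator_relative_variance_guar (r : ℕ) (hr : 2 ≤ r) (p : ℝ)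
    (hp0 : 0 < p) (hp1 : p < 1) :
    (negbinExp2 (r + 1) p (r - 1) (1 - p) (fun n₁ n₂ => (ghat r n₁ n₂) ^ 2) -
        (negbinExp2 (r + 1) p (r - 1) (1 - p) (ghat r)) ^ 2) / (p / (1 - p)) ^ 2 <
      1 / ((r : ℝ) - 1) := by
  have hr₁ : (0 : ℝ) < r - 1 := by rw [sub_pos]; exact_mod_cast hr
  have hsplit : (p / (1 - p)) ^ 2 * (r / (r - 1))
      = (p / (1 - p)) ^ 2 + 1 / (r - 1) * (p / (1 - p)) ^ 2 := by
    field_simp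
    ring
  rw [negbinExp2_ghat hr hp0 hp1, div_lt_iff₀ (by positivity)]
  linarith [negbinExp2_ghat_sq_lt hr hp0 hp1]
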